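/- There exists a constant C > 0 (depending only on k₀) such that for every ν > 0, every r > 0, every w ∈ V, and every v ∈ V with ‖v‖_{ℓ⁴} ≤ r, one has −Re ∑ₙ Bₙ(w, v)·w̄ₙ ≤ (ν/2)·‖w‖² + C·(r⁴/ν³)·|w|². -/

import Mathlib

open Complex MeasureTheory Filter Topology

noncomputable section

/-- The wave numbers `kₙ = k₀ · 2ⁿ`. -/
def kk (k₀ : ℝ) (n : ℕ) : ℝ := k₀ * 2 ^ n

/-- The GOY nonlinearity `B(u,v)ₙ`; sequences are indexed from `1`, with the
convention that the `0`-th entry (playing the role of `u₀ = u₋₁ = 0`) vanishes. -/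
def goyB (k₀ : ℝ) (u v : ℕ → ℂ) (n : ℕ) : ℂ :=
  if n = 0 then 0 else
    Complex.I * (kk k₀ n : ℂ) *
      ((1 / 4) * (starRingEnd ℂ) (u (n + 1)) * (starRingEnd ℂ) (v (n - 1))
        - (1 / 2) * ((starRingEnd ℂ) (u (n + 1)) * (starRingEnd ℂ) (v (n + 2))
            + (starRingEnd ℂ) (u (n + 2)) * (starRingEnd ℂ) (v (n + 1)))
        + (1 / 8) * (starRingEnd ℂ) (u (n - 1)) * (starRingEnd ℂ) (v (n - 2)))

/-- Membership in `H`: square summability. -/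
def memH (u : ℕ → ℂ) : Prop := Summable fun n => ‖u n‖ ^ 2

/-- Membership in `V`. -/
def memV (k₀ : ℝ) (u : ℕ → ℂ) : Prop := Summable fun n => kk k₀ n ^ 2 * ‖u n‖ ^ 2

/-- `|u|² = ∑ₙ |uₙ|²`. -/
def hnormSq (u : ℕ → ℂ) : ℝ := ∑' n, ‖u n‖ ^ 2

/-- `‖u‖² = ∑ₙ kₙ²|uₙ|²`. -/
def vnormSq (k₀ : ℝ) (u : ℕ → ℂ) : ℝ := ∑' n, kk k₀ n ^ 2 * ‖u n‖ ^ 2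

/-- `‖u‖_{V'}² = ∑ₙ kₙ⁻²|uₙ|²`. -/
def vdualSq (k₀ : ℝ) (u : ℕ → ℂ) : ℝ := ∑' n, ‖u n‖ ^ 2 / kk k₀ n ^ 2

end

/-!
Every monomial of `⟨B(w, v), w⟩` has the form `kₙ wₙ w_{n+i} v_{n+j}`, so two applications of
Cauchy–Schwarz bound its sum by `‖w‖ ‖w‖_{ℓ⁴} ‖v‖_{ℓ⁴} ≤ ‖w‖ |w| r`; the coefficients add up to
`11/8`. Since `w₀ = 0`, every active wave number is at least `2k₀`, whence `2k₀ |w| ≤ ‖w‖`.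
With this Poincaré inequality the product `r ‖w‖ |w|` is absorbed into `(ν/2) ‖w‖²` when
`ν ‖w‖` dominates `r |w|`, and is of order `r⁴/(k₀² ν³) |w|²` otherwise.
-/

theorem summable_mul_and_tsum_mul_le {f g : ℕ → ℝ} (hf_nonneg : ∀ n, 0 ≤ f n)
    (hg_nonneg : ∀ n, 0 ≤ g n) (hf : Summable fun n => f n ^ 2)
    (hg : Summable fun n => g n ^ 2) {F G : ℝ} (hF : 0 ≤ F) (hG : 0 ≤ G)
    (hfF : ∑' n, f n ^ 2 ≤ F ^ 2) (hgG : ∑' n, g n ^ 2 ≤ G ^ 2) :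
    Summable (fun n => f n * g n) ∧ ∑' n, f n * g n ≤ F * G := by
  have hf' : Summable fun n => f n ^ (2 : ℝ) := by simpa [Real.rpow_two] using hf
  have hg' : Summable fun n => g n ^ (2 : ℝ) := by simpa [Real.rpow_two] using hg
  obtain ⟨hsum, hle⟩ := Real.summable_and_inner_le_Lp_mul_Lq_tsum_of_nonneg
    Real.HolderConjugate.two_two hf_nonneg hg_nonneg hf' hg'
  refine ⟨hsum, hle.trans ?_⟩
  simp only [Real.rpow_two, ← Real.sqrt_eq_rpow]
  calc √(∑' n, f n ^ 2) * √(∑' n, g n ^ 2) ≤ √(F ^ 2) * √(G ^ 2) := by gcongr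
    _ = F * G := by rw [Real.sqrt_sq hF, Real.sqrt_sq hG]

theorem summable_mul_mul_and_tsum_mul_mul_le {f g h : ℕ → ℝ} (hf_nonneg : ∀ n, 0 ≤ f n)
    (hg_nonneg : ∀ n, 0 ≤ g n) (hh_nonneg : ∀ n, 0 ≤ h n) (hf : Summable fun n => f n ^ 2)
    (hg : Summable fun n => g n ^ 4) (hh : Summable fun n => h n ^ 4) {F G H : ℝ}
    (hF : 0 ≤ F) (hG : 0 ≤ G) (hH : 0 ≤ H) (hfF : ∑' n, f n ^ 2 ≤ F ^ 2)
    (hgG : ∑' n, g n ^ 4 ≤ G ^ 4) (hhH : ∑' n, h n ^ 4 ≤ H ^ 4) :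
    Summable (fun n => f n * g n * h n) ∧ ∑' n, f n * g n * h n ≤ F * G * H := by
  have pow_four : ∀ x : ℝ, x ^ 4 = (x ^ 2) ^ 2 := fun x => by ring
  simp only [pow_four] at hg hh hgG hhH
  obtain ⟨hgh, hghGH⟩ := summable_mul_and_tsum_mul_le (fun n => sq_nonneg (g n))
    (fun n => sq_nonneg (h n)) hg hh (sq_nonneg G) (sq_nonneg H) hgG hhH
  simp only [← mul_pow] at hgh hghGH
  simpa only [mul_assoc] using summable_mul_and_tsum_mul_le hf_nonneg
    (fun n => mul_nonneg (hg_nonneg n) (hh_nonneg n)) hf hgh hF (mul_nonneg hG hH) hfF hghGH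

theorem summable_pow_four_and_tsum_le {a : ℕ → ℝ} (ha : Summable fun n => a n ^ 2) :
    Summable (fun n => a n ^ 4) ∧ ∑' n, a n ^ 4 ≤ (∑' n, a n ^ 2) ^ 2 := by
  have hle : ∀ n, a n ^ 4 ≤ (∑' m, a m ^ 2) * a n ^ 2 := fun n => by
    have := ha.le_tsum n fun m _ => sq_nonneg (a m)
    nlinarith [sq_nonneg (a n)]
  have hs := Summable.of_nonneg_of_le (fun n => by positivity) hle (ha.mul_left _)
  refine ⟨hs, (hs.tsum_le_tsum hle (ha.mul_left _)).trans_eq ?_⟩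
  rw [tsum_mul_left, sq]

/-- The condition on `σ` covers both `n ↦ n + j` and `n ↦ n - j`; the latter sends `0, …, j` to
`0`, where `h` vanishes. -/
theorem summable_comp_and_tsum_comp_le {h : ℕ → ℝ} (h_nonneg : ∀ n, 0 ≤ h n) (hs : Summable h)
    (h_zero : h 0 = 0) {σ : ℕ → ℕ} (hσ : Set.InjOn σ {n | σ n ≠ 0}) :
    Summable (fun n => h (σ n)) ∧ ∑' n, h (σ n) ≤ ∑' n, h n := by
  set s : Set ℕ := {n | σ n ≠ 0}
  have hval : Function.Injective ((↑) : s → ℕ) := Subtype.coe_injective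
  have hsupp : ∀ n ∉ Set.range ((↑) : s → ℕ), h (σ n) = 0 := fun n hn => by
    have : σ n = 0 := by simpa [s] using hn
    rw [this, h_zero]
  have hinj : Function.Injective (σ ∘ ((↑) : s → ℕ)) := fun a b hab =>
    Subtype.ext (hσ a.2 b.2 hab)
  have hsub : Summable (h ∘ σ ∘ ((↑) : s → ℕ)) := hs.comp_injective hinj
  refine ⟨(hval.summable_iff hsupp).1 hsub, ?_⟩
  rw [← hval.tsum_eq (Function.support_subset_iff'.2 hsupp)]
  exact tsum_comp_le_tsum_of_inj hs h_nonneg hinj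

theorem mul_mul_le_half_sq_add {κ s X Y : ℝ} (hκ : 0 < κ) (hY : 0 ≤ Y)
    (hXY : κ * Y ≤ X) : s * X * Y ≤ X ^ 2 / 2 + 8 * s ^ 4 / κ ^ 2 * Y ^ 2 := by
  have hX : 0 ≤ X := (mul_nonneg hκ.le hY).trans hXY
  rcases le_or_gt (2 * s * Y) X with hsmall | hlarge
  · have : 0 ≤ 8 * s ^ 4 / κ ^ 2 * Y ^ 2 := by positivity
    nlinarith [mul_le_mul_of_nonneg_left hsmall hX]
  · have hκs : κ * Y ≤ 2 * s * Y := hXY.trans hlarge.le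
    have hsq : κ ^ 2 * Y ^ 2 ≤ 4 * s ^ 2 * Y ^ 2 := by nlinarith [mul_nonneg hκ.le hY]
    have hsY : 0 ≤ s * Y := by linarith
    have : s * X * Y ≤ 2 * s ^ 2 * Y ^ 2 := by nlinarith [mul_le_mul_of_nonneg_left hlarge.le hsY]
    have : 2 * s ^ 2 * Y ^ 2 ≤ 8 * s ^ 4 / κ ^ 2 * Y ^ 2 := by
      rw [div_mul_eq_mul_div, le_div_iff₀ (by positivity)]
      nlinarith [mul_le_mul_of_nonneg_left hsq (by positivity : (0:ℝ) ≤ 2 * s ^ 2)]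
    nlinarith [sq_nonneg X]

theorem mul_mul_mul_le_half_mul_sq_add {k₀ ν c r X Y : ℝ} (hk₀ : 0 < k₀) (hν : 0 < ν)
    (hY : 0 ≤ Y) (hXY : 2 * k₀ * Y ≤ X) :
    c * r * X * Y ≤ ν / 2 * X ^ 2 + 2 * c ^ 4 / k₀ ^ 2 * (r ^ 4 / ν ^ 3) * Y ^ 2 := by
  have h := mul_mul_le_half_sq_add (s := c * r / ν) (by positivity) hY hXY
  calc c * r * X * Y = ν * (c * r / ν * X * Y) := by field_simp
    _ ≤ ν * (X ^ 2 / 2 + 8 * (c * r / ν) ^ 4 / (2 * k₀) ^ 2 * Y ^ 2) := by gcongr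
    _ = _ := by field_simp; ring

theorem kk_nonneg {k₀ : ℝ} (hk₀ : 0 ≤ k₀) (n : ℕ) : 0 ≤ kk k₀ n := by
  unfold kk; positivity

theorem le_kk {k₀ : ℝ} (hk₀ : 0 ≤ k₀) (n : ℕ) : k₀ ≤ kk k₀ n :=
  le_mul_of_one_le_right hk₀ (one_le_pow₀ one_le_two)

theorem two_mul_le_kk {k₀ : ℝ} (hk₀ : 0 ≤ k₀) {n : ℕ} (hn : n ≠ 0) : 2 * k₀ ≤ kk k₀ n := by
  unfold kk
  have : (2 : ℝ) ≤ 2 ^ n := le_self_pow₀ one_le_two hn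
  nlinarith

theorem hnormSq_nonneg (u : ℕ → ℂ) : 0 ≤ hnormSq u :=
  tsum_nonneg fun _ => by positivity

theorem vnormSq_nonneg (k₀ : ℝ) (u : ℕ → ℂ) : 0 ≤ vnormSq k₀ u :=
  tsum_nonneg fun _ => by positivity

theorem memH_of_memV {k₀ : ℝ} (hk₀ : 0 < k₀) {u : ℕ → ℂ} (hu : memV k₀ u) : memH u := by
  refine Summable.of_nonneg_of_le (fun n => sq_nonneg _) (fun n => ?_) (hu.mul_left (k₀ ^ 2)⁻¹)
  rw [le_inv_mul_iff₀ (by positivity)]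
  gcongr
  exact le_kk hk₀.le n

theorem two_mul_sqrt_hnormSq_le {k₀ : ℝ} (hk₀ : 0 ≤ k₀) {u : ℕ → ℂ} (hu0 : u 0 = 0)
    (huH : memH u) (huV : memV k₀ u) : 2 * k₀ * √(hnormSq u) ≤ √(vnormSq k₀ u) := by
  refine Real.le_sqrt_of_sq_le ?_
  rw [mul_pow, Real.sq_sqrt (hnormSq_nonneg u), hnormSq, vnormSq, ← tsum_mul_left]
  refine (huH.mul_left _).tsum_le_tsum (fun n => ?_) huV
  rcases eq_or_ne n 0 with rfl | hn
  · simp [hu0]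
  · gcongr
    exact two_mul_le_kk hk₀ hn

theorem norm_goy_combination_le (a b c d e f g h : ℂ) :
    ‖1 / 4 * a * b - 1 / 2 * (c * d + e * f) + 1 / 8 * g * h‖ ≤
      1 / 4 * ‖a‖ * ‖b‖ + 1 / 2 * ‖c‖ * ‖d‖ + 1 / 2 * ‖e‖ * ‖f‖ + 1 / 8 * ‖g‖ * ‖h‖ := by
  refine (norm_add_le_of_le (norm_sub_le_of_le le_rfl (norm_mul_le_of_le le_rfl (norm_add_le _ _)))
    le_rfl).trans_eq ?_
  simp only [norm_mul]
  norm_num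
  ring

theorem norm_goyB_le {k₀ : ℝ} (hk₀ : 0 ≤ k₀) (u v : ℕ → ℂ) (n : ℕ) :
    ‖goyB k₀ u v n‖ ≤ kk k₀ n * (1 / 4 * ‖u (n + 1)‖ * ‖v (n - 1)‖
      + 1 / 2 * ‖u (n + 1)‖ * ‖v (n + 2)‖ + 1 / 2 * ‖u (n + 2)‖ * ‖v (n + 1)‖
      + 1 / 8 * ‖u (n - 1)‖ * ‖v (n - 2)‖) := by
  have hk := kk_nonneg hk₀ n
  unfold goyB
  split_ifs
  · rw [norm_zero]; positivity
  rw [norm_mul, norm_mul, Complex.norm_I, one_mul, Complex.norm_real, Real.norm_of_nonneg hk]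
  refine mul_le_mul_of_nonneg_left ((norm_goy_combination_le _ _ _ _ _ _ _ _).trans_eq ?_) hk
  simp only [RCLike.norm_conj]

theorem norm_tsum_goyB_mul_conj_le {k₀ R : ℝ} (hk₀ : 0 ≤ k₀) (hR : 0 ≤ R) {w v : ℕ → ℂ}
    (hw0 : w 0 = 0) (hv0 : v 0 = 0) (hwH : memH w) (hwV : memV k₀ w)
    (hv : Summable fun n => ‖v n‖ ^ 4) (hvR : ∑' n, ‖v n‖ ^ 4 ≤ R ^ 4) :
    ‖∑' n, goyB k₀ w v n * starRingEnd ℂ (w n)‖ ≤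
      11 / 8 * R * √(vnormSq k₀ w) * √(hnormSq w) := by
  set X := √(vnormSq k₀ w)
  set Y := √(hnormSq w)
  have hX : X ^ 2 = vnormSq k₀ w := Real.sq_sqrt (vnormSq_nonneg k₀ w)
  have hY : Y ^ 2 = hnormSq w := Real.sq_sqrt (hnormSq_nonneg w)
  have hf : Summable fun n => (kk k₀ n * ‖w n‖) ^ 2 := by
    simp only [mul_pow]
    exact hwV
  have hfX : ∑' n, (kk k₀ n * ‖w n‖) ^ 2 ≤ X ^ 2 := by
    simp only [mul_pow, hX]
    exact le_rfl
  obtain ⟨hw, hwH2⟩ := summable_pow_four_and_tsum_le hwH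
  have hwY : ∑' n, ‖w n‖ ^ 4 ≤ Y ^ 4 := by
    rw [show Y ^ 4 = (Y ^ 2) ^ 2 by ring, hY]
    exact hwH2
  have term : ∀ σ τ : ℕ → ℕ, Set.InjOn σ {n | σ n ≠ 0} → Set.InjOn τ {n | τ n ≠ 0} →
      ∃ S, HasSum (fun n => kk k₀ n * ‖w n‖ * ‖w (σ n)‖ * ‖v (τ n)‖) S ∧ S ≤ X * Y * R := by
    intro σ τ hσ hτ
    obtain ⟨hwσ, hwσY⟩ := summable_comp_and_tsum_comp_le (h := fun n => ‖w n‖ ^ 4)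
      (fun _ => by positivity) hw (by simp [hw0]) hσ
    obtain ⟨hvτ, hvτR⟩ := summable_comp_and_tsum_comp_le (h := fun n => ‖v n‖ ^ 4)
      (fun _ => by positivity) hv (by simp [hv0]) hτ
    obtain ⟨hs, hle⟩ := summable_mul_mul_and_tsum_mul_mul_le
      (fun n => mul_nonneg (kk_nonneg hk₀ n) (norm_nonneg _)) (fun _ => norm_nonneg _)
      (fun _ => norm_nonneg _) hf hwσ hvτ (Real.sqrt_nonneg _) (Real.sqrt_nonneg _) hR hfX
      (hwσY.trans hwY) (hvτR.trans hvR)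
    exact ⟨_, hs.hasSum, hle⟩
  have inj_add (j : ℕ) : Set.InjOn (· + j) {n | n + j ≠ 0} := (add_left_injective j).injOn
  have inj_sub (j : ℕ) : Set.InjOn (· - j) {n | n - j ≠ 0} := fun m hm n hn h => by
    simp only [Set.mem_ofPred_eq] at hm hn h
    omega
  obtain ⟨S₁, h₁, hS₁⟩ := term (· + 1) (· - 1) (inj_add 1) (inj_sub 1)
  obtain ⟨S₂, h₂, hS₂⟩ := term (· + 1) (· + 2) (inj_add 1) (inj_add 2)
  obtain ⟨S₃, h₃, hS₃⟩ := term (· + 2) (· + 1) (inj_add 2) (inj_add 1)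
  obtain ⟨S₄, h₄, hS₄⟩ := term (· - 1) (· - 2) (inj_sub 1) (inj_sub 2)
  have hsum := (((h₁.mul_left (1 / 4)).add (h₂.mul_left (1 / 2))).add
    (h₃.mul_left (1 / 2))).add (h₄.mul_left (1 / 8))
  refine (tsum_of_norm_bounded hsum fun n => ?_).trans (by linarith)
  rw [norm_mul, RCLike.norm_conj]
  refine (mul_le_mul_of_nonneg_right (norm_goyB_le hk₀ w v n) (norm_nonneg _)).trans_eq ?_
  ring

/-- For `‖v‖_{ℓ⁴} ≤ r`,
`−Re ∑ₙ Bₙ(w,v)·w̄ₙ ≤ (ν/2)‖w‖² + C (r⁴/ν³) |w|²`. -/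
theorem stmt_10 (k₀ : ℝ) (hk₀ : 0 < k₀) :
    ∃ C : ℝ, 0 < C ∧ ∀ ν : ℝ, 0 < ν → ∀ r : ℝ, 0 < r → ∀ w v : ℕ → ℂ,
      w 0 = 0 → v 0 = 0 → memV k₀ w → memV k₀ v →
      (∑' n, ‖v n‖ ^ 4) ^ ((1 : ℝ) / 4) ≤ r →
      -(∑' n, goyB k₀ w v n * (starRingEnd ℂ) (w n)).re ≤
        ν / 2 * vnormSq k₀ w + C * (r ^ 4 / ν ^ 3) * hnormSq w := by
  refine ⟨2 * (11 / 8) ^ 4 / k₀ ^ 2, by positivity, fun ν hν r hr w v hw0 hv0 hwV hvV hvr => ?_⟩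
  have hwH := memH_of_memV hk₀ hwV
  obtain ⟨hv, -⟩ := summable_pow_four_and_tsum_le (memH_of_memV hk₀ hvV)
  have hvr4 : ∑' n, ‖v n‖ ^ 4 ≤ r ^ 4 := by
    rw [one_div, Real.rpow_inv_le_iff_of_pos (tsum_nonneg fun _ => by positivity) hr.le
      four_pos] at hvr
    exact_mod_cast hvr
  calc -(∑' n, goyB k₀ w v n * (starRingEnd ℂ) (w n)).re
      ≤ ‖∑' n, goyB k₀ w v n * (starRingEnd ℂ) (w n)‖ := by
        simpa using Complex.re_le_norm (-∑' n, goyB k₀ w v n * (starRingEnd ℂ) (w n))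
    _ ≤ 11 / 8 * r * √(vnormSq k₀ w) * √(hnormSq w) :=
        norm_tsum_goyB_mul_conj_le hk₀.le hr.le hw0 hv0 hwH hwV hv hvr4
    _ ≤ _ := by
        simpa only [Real.sq_sqrt (vnormSq_nonneg k₀ w), Real.sq_sqrt (hnormSq_nonneg w)] using
          mul_mul_mul_le_half_mul_sq_add hk₀ hν (Real.sqrt_nonneg _)
            (two_mul_sqrt_hnormSq_le hk₀.le hw0 hwH hwV)
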